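/- arXiv:0911.3514 — 6 statements merged into one kernel-verified Lean document; each statement's English description precedes it below -/
import Mathlib

section
/- Let H and L be real Hilbert spaces, let Φ : H → L be a bounded linear operator, and let A ⊆ H be a nonempty symmetric set (x ∈ A implies −x ∈ A), e.g. a union of linear subspaces. Suppose there is α > 0 such that α‖x₁ + x₂‖² ≤ ‖Φ(x₁ + x₂)‖² for all x₁, x₂ ∈ A. Let x ∈ H, y ∈ L, let x_A ∈ A be a best approximation of x in A (i.e. ‖x − x_A‖ = inf_{x̃ ∈ A} ‖x − x̃‖), and let x_opt ∈ A satisfy ‖y − Φ x_opt‖ ≤ ‖y − Φ x_A‖ (in particular any minimizer of ‖y − Φ x̃‖ over x̃ ∈ A works). Then ‖x − x_opt‖ ≤ (2/√α)·‖y − Φ x_A‖ + ‖x − x_A‖. -/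
/-- near-optimality upper bound for any `x_opt` at least as good as `x_A`. -/
theorem stmt_0
    {H L : Type*} [NormedAddCommGroup H] [InnerProductSpace ℝ H] [CompleteSpace H]
    [NormedAddCommGroup L] [InnerProductSpace ℝ L] [CompleteSpace L]
    (Φ : H →L[ℝ] L) (A : Set H) (hA : A.Nonempty)
    (hsym : ∀ x ∈ A, -x ∈ A)
    (α : ℝ) (hα : 0 < α)
    (hlip : ∀ x₁ ∈ A, ∀ x₂ ∈ A, α * ‖x₁ + x₂‖ ^ 2 ≤ ‖Φ (x₁ + x₂)‖ ^ 2)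
    (x : H) (y : L)
    (xA : H) (hxA : xA ∈ A) (hbest : ∀ z ∈ A, ‖x - xA‖ ≤ ‖x - z‖)
    (xopt : H) (hxopt : xopt ∈ A) (hopt : ‖y - Φ xopt‖ ≤ ‖y - Φ xA‖) :
    ‖x - xopt‖ ≤ (2 / Real.sqrt α) * ‖y - Φ xA‖ + ‖x - xA‖ := by
  have hs : (0:ℝ) < Real.sqrt α := Real.sqrt_pos.mpr hα
  have key : α * ‖xA - xopt‖ ^ 2 ≤ ‖Φ (xA - xopt)‖ ^ 2 := by
    have := hlip xA hxA (-xopt) (hsym _ hxopt)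
    simpa [sub_eq_add_neg] using this
  have h1 : Real.sqrt α * ‖xA - xopt‖ ≤ ‖Φ (xA - xopt)‖ := by
    have h2 : (Real.sqrt α * ‖xA - xopt‖) ^ 2 ≤ ‖Φ (xA - xopt)‖ ^ 2 := by
      have : (Real.sqrt α) ^ 2 = α := Real.sq_sqrt hα.le
      calc (Real.sqrt α * ‖xA - xopt‖) ^ 2 = α * ‖xA - xopt‖ ^ 2 := by
            rw [mul_pow, this]
        _ ≤ _ := key
    nlinarith [h2, norm_nonneg (Φ (xA - xopt)),
      mul_nonneg (Real.sqrt_nonneg α) (norm_nonneg (xA - xopt))]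
  have h3 : ‖Φ (xA - xopt)‖ ≤ 2 * ‖y - Φ xA‖ := by
    have : Φ (xA - xopt) = (Φ xA - y) + (y - Φ xopt) := by
      rw [map_sub]; abel
    calc ‖Φ (xA - xopt)‖ = ‖(Φ xA - y) + (y - Φ xopt)‖ := by rw [this]
      _ ≤ ‖Φ xA - y‖ + ‖y - Φ xopt‖ := norm_add_le _ _
      _ ≤ ‖y - Φ xA‖ + ‖y - Φ xA‖ := by rw [norm_sub_rev]; linarith
      _ = 2 * ‖y - Φ xA‖ := by ring
  have h4 : ‖xA - xopt‖ ≤ (2 / Real.sqrt α) * ‖y - Φ xA‖ := by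
    rw [div_mul_eq_mul_div, le_div_iff₀ hs]
    nlinarith
  calc ‖x - xopt‖ = ‖(x - xA) + (xA - xopt)‖ := by abel_nf
    _ ≤ ‖x - xA‖ + ‖xA - xopt‖ := norm_add_le _ _
    _ ≤ ‖x - xA‖ + (2 / Real.sqrt α) * ‖y - Φ xA‖ := by linarith
    _ = _ := by ring
end

section
/- Let H and L be real Hilbert spaces and Φ : H → L a bounded linear operator. Let x ∈ H, y ∈ L and x_A, x_opt ∈ H satisfy: (i) ⟨x_A − x_opt, x − x_A⟩ = 0; (ii) ⟨y − Φ x_opt, Φ(x_A − x_opt)⟩ = 0; and (iii) ‖Φ(x_A − x_opt)‖² ≤ β‖x_A − x_opt‖² for some β > 0. Then ‖x − x_opt‖² ≥ (1/β)·(‖y − Φ x_A‖² − ‖y − Φ x_opt‖²) + ‖x − x_A‖². -/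
open scoped RealInnerProductSpace

/-- key inequality in the proof of the worst-case lower bound. -/
theorem stmt_2
    {H L : Type*} [NormedAddCommGroup H] [InnerProductSpace ℝ H] [CompleteSpace H]
    [NormedAddCommGroup L] [InnerProductSpace ℝ L] [CompleteSpace L]
    (Φ : H →L[ℝ] L) (x xA xopt : H) (y : L) (β : ℝ) (hβ : 0 < β)
    (h1 : ⟪xA - xopt, x - xA⟫ = 0)
    (h2 : ⟪y - Φ xopt, Φ (xA - xopt)⟫ = 0)
    (h3 : ‖Φ (xA - xopt)‖ ^ 2 ≤ β * ‖xA - xopt‖ ^ 2) :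
    ‖x - xopt‖ ^ 2 ≥ (1 / β) * (‖y - Φ xA‖ ^ 2 - ‖y - Φ xopt‖ ^ 2) + ‖x - xA‖ ^ 2 := by
  have e1 : ‖x - xopt‖ ^ 2 = ‖x - xA‖ ^ 2 + ‖xA - xopt‖ ^ 2 := by
    have : x - xopt = (x - xA) + (xA - xopt) := by abel
    rw [this, norm_add_sq_real, real_inner_comm, h1]
    ring
  have e2 : ‖y - Φ xA‖ ^ 2 = ‖y - Φ xopt‖ ^ 2 + ‖Φ (xA - xopt)‖ ^ 2 := by
    have : y - Φ xA = (y - Φ xopt) - Φ (xA - xopt) := by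
      rw [map_sub]; abel
    rw [this, norm_sub_sq_real, h2]
    ring
  have key : (1 / β) * (‖y - Φ xA‖ ^ 2 - ‖y - Φ xopt‖ ^ 2) ≤ ‖xA - xopt‖ ^ 2 := by
    rw [e2]
    rw [div_mul_eq_mul_div, one_mul, div_le_iff₀ hβ]
    linarith [h3]
  linarith [e1, key]
end

section
/- Let H and L be real Hilbert spaces, Φ : H → L a bounded linear operator with adjoint Φ*, A ⊆ H a nonempty symmetric set (x ∈ A implies −x ∈ A), y ∈ L and μ > 0. Assume the upper Lipschitz bound ‖Φ(x₁ + x₂)‖² ≤ (1/μ)‖x₁ + x₂‖² holds for all x₁, x₂ ∈ A (i.e. 1/μ ≥ β). Let xⁿ ∈ A and let xⁿ⁺¹ ∈ A be a best approximation in A to xⁿ + μΦ*(y − Φxⁿ), i.e. ‖xⁿ⁺¹ − (xⁿ + μΦ*(y − Φxⁿ))‖ ≤ ‖x̃ − (xⁿ + μΦ*(y − Φxⁿ))‖ for all x̃ ∈ A. Then for every x_A ∈ A: ‖y − Φxⁿ⁺¹‖² − ‖y − Φxⁿ‖² ≤ −2⟨x_A − xⁿ, Φ*(y − Φxⁿ)⟩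 + (1/μ)‖x_A − xⁿ‖². -/
open scoped RealInnerProductSpace

/-- descent lemma for the Iterative Projection Algorithm. -/
theorem stmt_4
    {H L : Type*} [NormedAddCommGroup H] [InnerProductSpace ℝ H] [CompleteSpace H]
    [NormedAddCommGroup L] [InnerProductSpace ℝ L] [CompleteSpace L]
    (Φ : H →L[ℝ] L) (A : Set H) (hA : A.Nonempty)
    (hsym : ∀ x ∈ A, -x ∈ A)
    (y : L) (μ : ℝ) (hμ : 0 < μ)
    (hupper : ∀ x₁ ∈ A, ∀ x₂ ∈ A, ‖Φ (x₁ + x₂)‖ ^ 2 ≤ (1 / μ) * ‖x₁ + x₂‖ ^ 2)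
    (xn : H) (hxn : xn ∈ A)
    (xn1 : H) (hxn1 : xn1 ∈ A)
    (hproj : ∀ z ∈ A,
      ‖xn1 - (xn + μ • (ContinuousLinearMap.adjoint Φ) (y - Φ xn))‖ ≤
      ‖z - (xn + μ • (ContinuousLinearMap.adjoint Φ) (y - Φ xn))‖) :
    ∀ xA ∈ A,
      ‖y - Φ xn1‖ ^ 2 - ‖y - Φ xn‖ ^ 2 ≤
        -2 * ⟪xA - xn, (ContinuousLinearMap.adjoint Φ) (y - Φ xn)⟫ +
          (1 / μ) * ‖xA - xn‖ ^ 2 := by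
  intro xA hxA
  set g := (ContinuousLinearMap.adjoint Φ) (y - Φ xn) with hg
  -- squared projection inequality
  have hsq : ‖xn1 - (xn + μ • g)‖ ^ 2 ≤ ‖xA - (xn + μ • g)‖ ^ 2 :=
    pow_le_pow_left₀ (norm_nonneg _) (hproj xA hxA) 2
  have e1 : xn1 - (xn + μ • g) = (xn1 - xn) - μ • g := by abel
  have e2 : xA - (xn + μ • g) = (xA - xn) - μ • g := by abel
  have expand : ∀ v : H, ‖v - μ • g‖ ^ 2 = ‖v‖ ^ 2 - 2 * (μ * ⟪v, g⟫) + μ ^ 2 * ‖g‖ ^ 2 := by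
    intro v
    rw [norm_sub_sq_real, real_inner_smul_right, norm_smul, Real.norm_eq_abs,
      mul_pow, sq_abs]
  rw [e1, e2, expand, expand] at hsq
  -- from hsq : ‖xn1-xn‖² - 2μ⟪xn1-xn,g⟫ + ... ≤ ‖xA-xn‖² - 2μ⟪xA-xn,g⟫ + ...
  have hkey : (1/μ) * ‖xn1 - xn‖ ^ 2 - 2 * ⟪xn1 - xn, g⟫ ≤
      (1/μ) * ‖xA - xn‖ ^ 2 - 2 * ⟪xA - xn, g⟫ := by
    have hμ' : 0 < 1/μ := by positivity
    have h1 : ‖xn1 - xn‖ ^ 2 - 2 * (μ * ⟪xn1 - xn, g⟫) ≤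
        ‖xA - xn‖ ^ 2 - 2 * (μ * ⟪xA - xn, g⟫) := by linarith
    have h2 := mul_le_mul_of_nonneg_left h1 hμ'.le
    have hinv : (1/μ) * μ = 1 := by field_simp
    nlinarith [h2, hinv]
  -- upper Lipschitz bound on xn1 - xn
  have hΦ : ‖Φ (xn1 - xn)‖ ^ 2 ≤ (1/μ) * ‖xn1 - xn‖ ^ 2 := by
    have := hupper xn1 hxn1 (-xn) (hsym xn hxn)
    simpa [sub_eq_add_neg] using this
  -- adjoint identity
  have hadj : ⟪Φ (xn1 - xn), y - Φ xn⟫ = ⟪xn1 - xn, g⟫ := by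
    rw [hg, ContinuousLinearMap.adjoint_inner_right]
  -- expand the objective
  have e3 : y - Φ xn1 = (y - Φ xn) - Φ (xn1 - xn) := by
    rw [map_sub]; abel
  have hexp : ‖y - Φ xn1‖ ^ 2 =
      ‖y - Φ xn‖ ^ 2 - 2 * ⟪y - Φ xn, Φ (xn1 - xn)⟫ + ‖Φ (xn1 - xn)‖ ^ 2 := by
    rw [e3, norm_sub_sq_real]
  rw [real_inner_comm] at hexp
  linarith [hexp, hΦ, hkey]
end

section
/- Let H and L be real Hilbert spaces, Φ : H → L a bounded linear operator with adjoint Φ*, A ⊆ H a nonempty symmetric set (x ∈ A implies −x ∈ A), y ∈ L, μ > 0 and α > 0. Assume for all x₁, x₂ ∈ A: α‖x₁ + x₂‖² ≤ ‖Φ(x₁ + x₂)‖² ≤ (1/μ)‖x₁ + x₂‖². Let xⁿ ∈ A and let xⁿ⁺¹ ∈ A be a best approximation in A to xⁿ + μΦ*(y − Φxⁿ). Then for every x_A ∈ A: ‖y − Φxⁿ⁺¹‖² ≤ ‖y − Φx_A‖² + (1/μ − α)‖x_A − xⁿ‖². -/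
/-!
Write `r = y - Φ xⁿ`, `g = μ Φ* r` and measure every candidate `x` by its step `u = x - xⁿ`.
Expanding squares gives `μ ‖r - Φ u‖² + ‖u‖² = μ ‖r‖² + ‖u - g‖² - ‖g‖² + μ ‖Φ u‖²`, so the
residual is majorised by the surrogate `‖r‖² + (‖u - g‖² - ‖g‖²) / μ` exactly when
`μ ‖Φ u‖² ≤ ‖u‖²`. The projection step minimises `‖u - g‖` over `A - xⁿ`, hence minimises the
surrogate. Comparing with the step `v = x_A - xⁿ` and using `α ‖v‖² ≤ ‖Φ v‖²` to return from the
surrogate to the residual costs `(1/μ - α) ‖v‖²`.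
-/

open ContinuousLinearMap

section

variable {H L : Type*} [NormedAddCommGroup H] [InnerProductSpace ℝ H] [CompleteSpace H]
  [NormedAddCommGroup L] [InnerProductSpace ℝ L] [CompleteSpace L]

theorem mul_norm_sub_apply_sq_add_norm_sq (Φ : H →L[ℝ] L) (r : L) (u : H) (μ : ℝ) :
    μ * ‖r - Φ u‖ ^ 2 + ‖u‖ ^ 2 =
      μ * ‖r‖ ^ 2 + ‖u - μ • adjoint Φ r‖ ^ 2 - ‖μ • adjoint Φ r‖ ^ 2 + μ * ‖Φ u‖ ^ 2 := by
  have hinner : inner ℝ u (μ • adjoint Φ r) = μ * inner ℝ r (Φ u) := by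
    rw [real_inner_smul_right, real_inner_comm, adjoint_inner_left]
  rw [norm_sub_sq_real r, norm_sub_sq_real u, hinner]
  ring

theorem norm_sub_apply_sq_le_of_norm_sub_gradient_step_le (Φ : H →L[ℝ] L) (r : L) (u v : H)
    {μ α : ℝ} (hμ : 0 < μ) (hu : ‖Φ u‖ ^ 2 ≤ (1 / μ) * ‖u‖ ^ 2) (hv : α * ‖v‖ ^ 2 ≤ ‖Φ v‖ ^ 2)
    (hstep : ‖u - μ • adjoint Φ r‖ ≤ ‖v - μ • adjoint Φ r‖) :
    ‖r - Φ u‖ ^ 2 ≤ ‖r - Φ v‖ ^ 2 + (1 / μ - α) * ‖v‖ ^ 2 := by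
  have hu' : μ * ‖Φ u‖ ^ 2 ≤ ‖u‖ ^ 2 := by
    simpa only [← mul_assoc, mul_one_div_cancel hμ.ne', one_mul]
      using mul_le_mul_of_nonneg_left hu hμ.le
  have hstep_sq := pow_le_pow_left₀ (norm_nonneg _) hstep 2
  have hv' : μ * α * ‖v‖ ^ 2 ≤ μ * ‖Φ v‖ ^ 2 := by
    simpa only [mul_assoc] using mul_le_mul_of_nonneg_left hv hμ.le
  have hsurrogate : μ * ‖r - Φ u‖ ^ 2 ≤ μ * (‖r - Φ v‖ ^ 2 + (1 / μ - α) * ‖v‖ ^ 2) := calc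
    μ * ‖r - Φ u‖ ^ 2
      = μ * ‖r‖ ^ 2 + ‖u - μ • adjoint Φ r‖ ^ 2 - ‖μ • adjoint Φ r‖ ^ 2
          - (‖u‖ ^ 2 - μ * ‖Φ u‖ ^ 2) := by
        linarith [mul_norm_sub_apply_sq_add_norm_sq Φ r u μ]
    _ ≤ μ * ‖r‖ ^ 2 + ‖v - μ • adjoint Φ r‖ ^ 2 - ‖μ • adjoint Φ r‖ ^ 2 := by linarith
    _ = μ * ‖r - Φ v‖ ^ 2 + ‖v‖ ^ 2 - μ * ‖Φ v‖ ^ 2 := by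
        linarith [mul_norm_sub_apply_sq_add_norm_sq Φ r v μ]
    _ ≤ μ * (‖r - Φ v‖ ^ 2 + (1 / μ - α) * ‖v‖ ^ 2) := by
        rw [mul_add, ← mul_assoc, mul_sub, mul_one_div_cancel hμ.ne', sub_mul, one_mul]
        linarith
  exact le_of_mul_le_mul_left hsurrogate hμ

end

theorem stmt_5_general
    {H L : Type*} [NormedAddCommGroup H] [InnerProductSpace ℝ H] [CompleteSpace H]
    [NormedAddCommGroup L] [InnerProductSpace ℝ L] [CompleteSpace L]
    (Φ : H →L[ℝ] L) (A : Set H)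
    (hsym : ∀ x ∈ A, -x ∈ A)
    (y : L) (μ α : ℝ) (hμ : 0 < μ)
    (hbi : ∀ x₁ ∈ A, ∀ x₂ ∈ A,
      α * ‖x₁ + x₂‖ ^ 2 ≤ ‖Φ (x₁ + x₂)‖ ^ 2 ∧ ‖Φ (x₁ + x₂)‖ ^ 2 ≤ (1 / μ) * ‖x₁ + x₂‖ ^ 2)
    (xn : H) (hxn : xn ∈ A)
    (xn1 : H) (hxn1 : xn1 ∈ A)
    (hproj : ∀ z ∈ A,
      ‖xn1 - (xn + μ • (ContinuousLinearMap.adjoint Φ) (y - Φ xn))‖ ≤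
      ‖z - (xn + μ • (ContinuousLinearMap.adjoint Φ) (y - Φ xn))‖) :
    ∀ xA ∈ A, ‖y - Φ xn1‖ ^ 2 ≤ ‖y - Φ xA‖ ^ 2 + (1 / μ - α) * ‖xA - xn‖ ^ 2 := by
  intro xA hxA
  have hupper := (hbi xn1 hxn1 (-xn) (hsym xn hxn)).2
  have hlower := (hbi xA hxA (-xn) (hsym xn hxn)).1
  rw [← sub_eq_add_neg] at hupper hlower
  have hstep := hproj xA hxA
  rw [sub_add_eq_sub_sub, sub_add_eq_sub_sub] at hstep
  have hresidual := norm_sub_apply_sq_le_of_norm_sub_gradient_step_le Φ (y - Φ xn) (xn1 - xn) (xA - xn)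
    hμ hupper hlower hstep
  simpa only [map_sub, sub_sub_sub_cancel_right] using hresidual

/-- residual bound after one Iterative Projection Algorithm step. -/
theorem stmt_5
    {H L : Type*} [NormedAddCommGroup H] [InnerProductSpace ℝ H] [CompleteSpace H]
    [NormedAddCommGroup L] [InnerProductSpace ℝ L] [CompleteSpace L]
    (Φ : H →L[ℝ] L) (A : Set H) (hA : A.Nonempty)
    (hsym : ∀ x ∈ A, -x ∈ A)
    (y : L) (μ α : ℝ) (hμ : 0 < μ) (hα : 0 < α)
    (hbi : ∀ x₁ ∈ A, ∀ x₂ ∈ A,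
      α * ‖x₁ + x₂‖ ^ 2 ≤ ‖Φ (x₁ + x₂)‖ ^ 2 ∧ ‖Φ (x₁ + x₂)‖ ^ 2 ≤ (1 / μ) * ‖x₁ + x₂‖ ^ 2)
    (xn : H) (hxn : xn ∈ A)
    (xn1 : H) (hxn1 : xn1 ∈ A)
    (hproj : ∀ z ∈ A,
      ‖xn1 - (xn + μ • (ContinuousLinearMap.adjoint Φ) (y - Φ xn))‖ ≤
      ‖z - (xn + μ • (ContinuousLinearMap.adjoint Φ) (y - Φ xn))‖) :
    ∀ xA ∈ A, ‖y - Φ xn1‖ ^ 2 ≤ ‖y - Φ xA‖ ^ 2 + (1 / μ - α) * ‖xA - xn‖ ^ 2 :=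
  stmt_5_general Φ A hsym y μ α hμ hbi xn hxn xn1 hxn1 hproj
end

section
/- Let H and L be real Hilbert spaces, Φ : H → L a bounded linear operator with adjoint Φ*, A ⊆ H a nonempty symmetric set (x ∈ A implies −x ∈ A), y ∈ L, μ > 0 and α > 0. Assume for all x₁, x₂ ∈ A: α‖x₁ + x₂‖² ≤ ‖Φ(x₁ + x₂)‖² ≤ (1/μ)‖x₁ + x₂‖². Let xⁿ ∈ A and let xⁿ⁺¹ ∈ A be a best approximation in A to xⁿ + μΦ*(y − Φxⁿ). Then for every x_A ∈ A: ‖x_A − xⁿ⁺¹‖² ≤ 2·(1/(μα) − 1)·‖x_A − xⁿ‖² + (4/α)·‖y − Φx_A‖². -/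
/-!
The IPA step `x⁺ = P_A(g)`, `g = x + μ Φ*(y - Φ x)`, minimises over `A` the surrogate cost
`C(z) = ‖y - Φ z‖² + μ⁻¹‖z - x‖² - ‖Φ(z - x)‖²`, because `C(z) = μ⁻¹‖z - g‖² + const`.
The upper Lipschitz bound gives `‖y - Φ x⁺‖² ≤ C(x⁺)`, the lower one
`C(x_A) ≤ ‖y - Φ x_A‖² + (μ⁻¹ - α)‖x_A - x‖²`; then
`α‖x_A - x⁺‖² ≤ ‖Φ(x_A - x⁺)‖² ≤ 2‖y - Φ x⁺‖² + 2‖y - Φ x_A‖²` closes the argument.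
-/

open ContinuousLinearMap

section SurrogateCost

variable {H L : Type*} [NormedAddCommGroup H] [InnerProductSpace ℝ H] [CompleteSpace H]
  [NormedAddCommGroup L] [InnerProductSpace ℝ L] [CompleteSpace L]

noncomputable def landweberStep (Φ : H →L[ℝ] L) (y : L) (μ : ℝ) (x : H) : H :=
  x + μ • adjoint Φ (y - Φ x)

noncomputable def surrogateCost (Φ : H →L[ℝ] L) (y : L) (μ : ℝ) (x z : H) : ℝ :=
  ‖y - Φ z‖ ^ 2 + (1 / μ) * ‖z - x‖ ^ 2 - ‖Φ (z - x)‖ ^ 2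

theorem surrogateCost_eq (Φ : H →L[ℝ] L) (y : L) {μ : ℝ} (hμ : μ ≠ 0) (x z : H) :
    surrogateCost Φ y μ x z = (1 / μ) * ‖z - landweberStep Φ y μ x‖ ^ 2
      + (‖y - Φ x‖ ^ 2 - μ * ‖adjoint Φ (y - Φ x)‖ ^ 2) := by
  set w := y - Φ x
  have hres : y - Φ z = w - Φ (z - x) := by simp only [w, map_sub]; abel
  have hstep : z - landweberStep Φ y μ x = (z - x) - μ • adjoint Φ w := by
    simp only [landweberStep, w]; abel
  have hinner : inner ℝ (z - x) (μ • adjoint Φ w) = μ * inner ℝ w (Φ (z - x)) := by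
    rw [real_inner_smul_right, real_inner_comm, adjoint_inner_left]
  rw [surrogateCost, hres, hstep, norm_sub_sq_real w, norm_sub_sq_real (z - x), hinner, norm_smul,
    mul_pow, Real.norm_eq_abs, sq_abs]
  field_simp
  ring

theorem surrogateCost_le_of_forall_norm_le (Φ : H →L[ℝ] L) (y : L) {μ : ℝ} (hμ : 0 < μ)
    {A : Set H} {x x' : H}
    (hproj : ∀ z ∈ A, ‖x' - landweberStep Φ y μ x‖ ≤ ‖z - landweberStep Φ y μ x‖)
    {z : H} (hz : z ∈ A) :
    surrogateCost Φ y μ x x' ≤ surrogateCost Φ y μ x z := by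
  rw [surrogateCost_eq Φ y hμ.ne', surrogateCost_eq Φ y hμ.ne']
  gcongr
  exact hproj z hz

end SurrogateCost

theorem sub_mem_bounds_of_neg_mem {H L : Type*} [NormedAddCommGroup H] [NormedAddCommGroup L]
    (Φ : H → L) {A : Set H} (hsym : ∀ x ∈ A, -x ∈ A) {lo hi : ℝ}
    (hbi : ∀ x₁ ∈ A, ∀ x₂ ∈ A,
      lo * ‖x₁ + x₂‖ ^ 2 ≤ ‖Φ (x₁ + x₂)‖ ^ 2 ∧ ‖Φ (x₁ + x₂)‖ ^ 2 ≤ hi * ‖x₁ + x₂‖ ^ 2)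
    {a b : H} (ha : a ∈ A) (hb : b ∈ A) :
    lo * ‖a - b‖ ^ 2 ≤ ‖Φ (a - b)‖ ^ 2 ∧ ‖Φ (a - b)‖ ^ 2 ≤ hi * ‖a - b‖ ^ 2 := by
  simpa only [sub_eq_add_neg] using hbi a ha (-b) (hsym b hb)

theorem norm_sub_sq_le_two_mul_add {E : Type*} [SeminormedAddCommGroup E] (a b : E) :
    ‖a - b‖ ^ 2 ≤ 2 * ‖a‖ ^ 2 + 2 * ‖b‖ ^ 2 := by
  calc ‖a - b‖ ^ 2 ≤ (‖a‖ + ‖b‖) ^ 2 := by gcongr; exact norm_sub_le a b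
    _ ≤ 2 * (‖a‖ ^ 2 + ‖b‖ ^ 2) := add_sq_le
    _ = 2 * ‖a‖ ^ 2 + 2 * ‖b‖ ^ 2 := by ring

theorem stmt_6_general
    {H L : Type*} [NormedAddCommGroup H] [InnerProductSpace ℝ H] [CompleteSpace H]
    [NormedAddCommGroup L] [InnerProductSpace ℝ L] [CompleteSpace L]
    (Φ : H →L[ℝ] L) (A : Set H)
    (hsym : ∀ x ∈ A, -x ∈ A)
    (y : L) (μ α : ℝ) (hμ : 0 < μ) (hα : 0 < α)
    (hbi : ∀ x₁ ∈ A, ∀ x₂ ∈ A,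
      α * ‖x₁ + x₂‖ ^ 2 ≤ ‖Φ (x₁ + x₂)‖ ^ 2 ∧ ‖Φ (x₁ + x₂)‖ ^ 2 ≤ (1 / μ) * ‖x₁ + x₂‖ ^ 2)
    (xn : H) (hxn : xn ∈ A)
    (xn1 : H) (hxn1 : xn1 ∈ A)
    (hproj : ∀ z ∈ A,
      ‖xn1 - (xn + μ • (ContinuousLinearMap.adjoint Φ) (y - Φ xn))‖ ≤
      ‖z - (xn + μ • (ContinuousLinearMap.adjoint Φ) (y - Φ xn))‖) :
    ∀ xA ∈ A,
      ‖xA - xn1‖ ^ 2 ≤ 2 * (1 / (μ * α) - 1) * ‖xA - xn‖ ^ 2 + (4 / α) * ‖y - Φ xA‖ ^ 2 := by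
  intro xA hxA
  have hcost : surrogateCost Φ y μ xn xn1 ≤ surrogateCost Φ y μ xn xA :=
    surrogateCost_le_of_forall_norm_le Φ y hμ hproj hxA
  have hstep := (sub_mem_bounds_of_neg_mem Φ hsym hbi hxn1 hxn).2
  have hinit := (sub_mem_bounds_of_neg_mem Φ hsym hbi hxA hxn).1
  have herr := (sub_mem_bounds_of_neg_mem Φ hsym hbi hxA hxn1).1
  have hres : ‖Φ (xA - xn1)‖ ^ 2 ≤ 2 * ‖y - Φ xn1‖ ^ 2 + 2 * ‖y - Φ xA‖ ^ 2 := by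
    have : Φ (xA - xn1) = (y - Φ xn1) - (y - Φ xA) := by simp only [map_sub]; abel
    rw [this]
    exact norm_sub_sq_le_two_mul_add _ _
  unfold surrogateCost at hcost
  have hbound : α * ‖xA - xn1‖ ^ 2 ≤ 2 * (1 / μ - α) * ‖xA - xn‖ ^ 2 + 4 * ‖y - Φ xA‖ ^ 2 := by
    linarith
  calc ‖xA - xn1‖ ^ 2
      ≤ (2 * (1 / μ - α) * ‖xA - xn‖ ^ 2 + 4 * ‖y - Φ xA‖ ^ 2) / α := by
        rw [le_div_iff₀ hα]; linarith
    _ = 2 * (1 / (μ * α) - 1) * ‖xA - xn‖ ^ 2 + (4 / α) * ‖y - Φ xA‖ ^ 2 := by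
        field_simp

/-- error contraction after one Iterative Projection Algorithm step. -/
theorem stmt_6
    {H L : Type*} [NormedAddCommGroup H] [InnerProductSpace ℝ H] [CompleteSpace H]
    [NormedAddCommGroup L] [InnerProductSpace ℝ L] [CompleteSpace L]
    (Φ : H →L[ℝ] L) (A : Set H) (hA : A.Nonempty)
    (hsym : ∀ x ∈ A, -x ∈ A)
    (y : L) (μ α : ℝ) (hμ : 0 < μ) (hα : 0 < α)
    (hbi : ∀ x₁ ∈ A, ∀ x₂ ∈ A,
      α * ‖x₁ + x₂‖ ^ 2 ≤ ‖Φ (x₁ + x₂)‖ ^ 2 ∧ ‖Φ (x₁ + x₂)‖ ^ 2 ≤ (1 / μ) * ‖x₁ + x₂‖ ^ 2)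
    (xn : H) (hxn : xn ∈ A)
    (xn1 : H) (hxn1 : xn1 ∈ A)
    (hproj : ∀ z ∈ A,
      ‖xn1 - (xn + μ • (ContinuousLinearMap.adjoint Φ) (y - Φ xn))‖ ≤
      ‖z - (xn + μ • (ContinuousLinearMap.adjoint Φ) (y - Φ xn))‖) :
    ∀ xA ∈ A,
      ‖xA - xn1‖ ^ 2 ≤ 2 * (1 / (μ * α) - 1) * ‖xA - xn‖ ^ 2 + (4 / α) * ‖y - Φ xA‖ ^ 2 :=
  stmt_6_general Φ A hsym y μ α hμ hα hbi xn hxn xn1 hxn1 hproj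
end

section
/- Let H and L be real Hilbert spaces, Φ : H → L a bounded linear operator with adjoint Φ*, A ⊆ H a proximal symmetric set containing 0 (e.g. a proximal union of linear subspaces), and μ > 0, α > 0 with α < 1/μ < 1.5·α. Assume for all x₁, x₂ ∈ A: α‖x₁ + x₂‖² ≤ ‖Φ(x₁ + x₂)‖² ≤ (1/μ)‖x₁ + x₂‖². Let x ∈ H and e ∈ L be arbitrary and set y = Φx + e. Let x_A ∈ A be a best approximation of x in A and set e_A = y − Φx_A; assume x_A ≠ 0 and e_A ≠ 0, and let δ > 0 satisfy δ‖e_A‖ < ‖x_A‖. Let (xⁿ) be the Iterative Projection Algorithm sequence: x⁰ = 0 and xⁿ⁺¹ ∈ A a best approximation in A to xⁿ + μΦ*(y − Φxⁿ). Then for every natural number n ≥ 2·ln(δ‖e_A‖/‖x_A‖)/ln(2/(μα) − 2), one has ‖x − xⁿ‖ ≤ (√c + δ)·‖e_A‖ + ‖x_A − x‖, where c = 4/(3α − 2/μ). -/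
/-!
Write `b = x_A - xⁿ`, `d = xⁿ⁺¹ - x_A` and `e_A = y - Φ x_A`. Since `xⁿ⁺¹` is at least as close as
`x_A ∈ A` to the gradient step, expanding the squares gives `‖d + b‖² - 2μ⟪Φd, Φb + e_A⟫ ≤ ‖b‖²`.
The upper bi-Lipschitz bound on `d + b = xⁿ⁺¹ - xⁿ`, Young's inequality on `⟪Φd, e_A⟫` and the lower
bounds on `b` and `d` (both differences of points of `A`) turn this into the contraction
`‖d‖² ≤ ρ ‖b‖² + (4/α) ‖e_A‖²` with `ρ = 2/(μα) - 2 ∈ (0, 1)`. Iterating, the squared error is at most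
`ρⁿ ‖x_A‖² + c ‖e_A‖²`, where `c = (4/α)/(1 - ρ)`, and the bound on `n` makes `ρⁿ ‖x_A‖² ≤ (δ ‖e_A‖)²`.
-/

open scoped RealInnerProductSpace

theorem norm_sq_sub_norm_sq_le_of_norm_sub_le {E : Type*} [NormedAddCommGroup E]
    [InnerProductSpace ℝ E] {u v w : E} (h : ‖u - w‖ ≤ ‖v - w‖) :
    ‖u‖ ^ 2 - ‖v‖ ^ 2 ≤ 2 * ⟪u - v, w⟫ := by
  have hsq := pow_le_pow_left₀ (norm_nonneg _) h 2
  rw [norm_sub_sq_real, norm_sub_sq_real] at hsq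
  rw [inner_sub_left]
  linarith

section ProjectedGradient

variable {H L : Type*} [NormedAddCommGroup H] [InnerProductSpace ℝ H] [CompleteSpace H]
  [NormedAddCommGroup L] [InnerProductSpace ℝ L] [CompleteSpace L]

theorem norm_sub_sq_le_of_proj_gradient_step (Φ : H →L[ℝ] L) {μ α : ℝ} (hμ : 0 < μ) (hα : 0 < α) {u u' a : H} (y : L)
    (hupper : ‖Φ (u' - u)‖ ^ 2 ≤ 1 / μ * ‖u' - u‖ ^ 2)
    (hlower : α * ‖a - u‖ ^ 2 ≤ ‖Φ (a - u)‖ ^ 2)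
    (hlower' : α * ‖u' - a‖ ^ 2 ≤ ‖Φ (u' - a)‖ ^ 2)
    (hproj : ‖u' - (u + μ • (ContinuousLinearMap.adjoint Φ) (y - Φ u))‖ ≤
      ‖a - (u + μ • (ContinuousLinearMap.adjoint Φ) (y - Φ u))‖) :
    ‖u' - a‖ ^ 2 ≤ (2 / (μ * α) - 2) * ‖a - u‖ ^ 2 + 4 / α * ‖y - Φ a‖ ^ 2 := by
  set b := a - u
  set d := u' - a
  set e := y - Φ a
  have hdb : u' - u = d + b := by simp [b, d]
  have hres : y - Φ u = Φ b + e := by simp [b, e, map_sub]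
  have hcompare : ‖d + b‖ ^ 2 - ‖b‖ ^ 2 ≤ 2 * (μ * (⟪Φ d, Φ b⟫ + ⟪Φ d, e⟫)) := by
    rw [sub_add_eq_sub_sub, sub_add_eq_sub_sub, hdb] at hproj
    have h := norm_sq_sub_norm_sq_le_of_norm_sub_le hproj
    rw [add_sub_cancel_right, real_inner_smul_right, ContinuousLinearMap.adjoint_inner_right,
      hres, inner_add_right] at h
    exact h
  have hexpand : ‖Φ (d + b)‖ ^ 2 = ‖Φ d‖ ^ 2 + 2 * ⟪Φ d, Φ b⟫ + ‖Φ b‖ ^ 2 := by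
    rw [map_add, norm_add_sq_real]
  have hyoung : 2 * ⟪Φ d, e⟫ ≤ ‖Φ d‖ ^ 2 / 2 + 2 * ‖e‖ ^ 2 := by
    nlinarith [real_inner_le_norm (Φ d) e, sq_nonneg (‖Φ d‖ - 2 * ‖e‖)]
  have hupper' : μ * ‖Φ (d + b)‖ ^ 2 ≤ ‖d + b‖ ^ 2 := by
    rwa [hdb, div_mul_eq_mul_div, one_mul, le_div_iff₀ hμ, mul_comm] at hupper
  have hμα : 0 < μ * α := mul_pos hμ hα
  rw [show (2 / (μ * α) - 2) * ‖b‖ ^ 2 + 4 / α * ‖e‖ ^ 2 =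
      (2 * (1 - μ * α) * ‖b‖ ^ 2 + 4 * μ * ‖e‖ ^ 2) / (μ * α) by field_simp,
    le_div_iff₀ hμα]
  nlinarith [mul_le_mul_of_nonneg_left hlower hμ.le, mul_le_mul_of_nonneg_left hlower' hμ.le,
    mul_le_mul_of_nonneg_left hyoung hμ.le]

theorem norm_sub_iterate_sq_succ_le (Φ : H →L[ℝ] L) {A : Set H} (hzero : (0 : H) ∈ A)
    (hsym : ∀ x ∈ A, -x ∈ A) {μ α : ℝ} (hμ : 0 < μ) (hα : 0 < α)
    (hbi : ∀ x₁ ∈ A, ∀ x₂ ∈ A,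
      α * ‖x₁ + x₂‖ ^ 2 ≤ ‖Φ (x₁ + x₂)‖ ^ 2 ∧ ‖Φ (x₁ + x₂)‖ ^ 2 ≤ (1 / μ) * ‖x₁ + x₂‖ ^ 2)
    (y : L) {a : H} (ha : a ∈ A) {xseq : ℕ → H} (hinit : xseq 0 = 0)
    (hstep : ∀ n, xseq (n + 1) ∈ A ∧ ∀ z ∈ A,
      ‖xseq (n + 1) - (xseq n + μ • (ContinuousLinearMap.adjoint Φ) (y - Φ (xseq n)))‖ ≤
      ‖z - (xseq n + μ • (ContinuousLinearMap.adjoint Φ) (y - Φ (xseq n)))‖) (n : ℕ) :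
    ‖a - xseq (n + 1)‖ ^ 2 ≤ (2 / (μ * α) - 2) * ‖a - xseq n‖ ^ 2 + 4 / α * ‖y - Φ a‖ ^ 2 := by
  have hmem : ∀ k, xseq k ∈ A := fun k => k.casesOn (hinit ▸ hzero) fun k => (hstep k).1
  have hdiff : ∀ u ∈ A, ∀ v ∈ A, α * ‖u - v‖ ^ 2 ≤ ‖Φ (u - v)‖ ^ 2 ∧
      ‖Φ (u - v)‖ ^ 2 ≤ 1 / μ * ‖u - v‖ ^ 2 := fun u hu v hv => by
    simpa only [← sub_eq_add_neg] using hbi u hu (-v) (hsym v hv)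
  rw [norm_sub_rev]
  exact norm_sub_sq_le_of_proj_gradient_step Φ hμ hα y
    (hdiff _ (hmem (n + 1)) _ (hmem n)).2 (hdiff _ ha _ (hmem n)).1
    (hdiff _ (hmem (n + 1)) _ ha).1 ((hstep n).2 a ha)

end ProjectedGradient

theorem le_pow_mul_add_of_le_mul_add {s : ℕ → ℝ} {ρ K c : ℝ} (hρ : 0 ≤ ρ) (hc : 0 ≤ c)
    (hfix : ρ * c + K = c) (h : ∀ n, s (n + 1) ≤ ρ * s n + K) (n : ℕ) :
    s n ≤ ρ ^ n * s 0 + c := by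
  suffices s n - c ≤ ρ ^ n * (s 0 - c) by nlinarith [pow_nonneg hρ n]
  induction n with
  | zero => simp
  | succ n ih =>
    calc s (n + 1) - c ≤ ρ * (s n - c) := by linarith [h n]
      _ ≤ ρ * (ρ ^ n * (s 0 - c)) := mul_le_mul_of_nonneg_left ih hρ
      _ = ρ ^ (n + 1) * (s 0 - c) := by ring

theorem le_add_of_sq_le_sq_add_sq {r a b : ℝ} (ha : 0 ≤ a) (hb : 0 ≤ b)
    (h : r ^ 2 ≤ a ^ 2 + b ^ 2) : r ≤ a + b := by
  nlinarith [mul_nonneg ha hb]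

theorem pow_le_of_log_div_log_le {ρ t : ℝ} (hρ₀ : 0 < ρ) (hρ₁ : ρ < 1) (ht : 0 < t) {n : ℕ}
    (hn : Real.log t / Real.log ρ ≤ n) : ρ ^ n ≤ t := by
  rw [div_le_iff_of_neg (Real.log_neg hρ₀ hρ₁)] at hn
  rwa [← Real.log_le_log_iff (pow_pos hρ₀ n) ht, Real.log_pow]

theorem rate_mem_Ioo {μ α : ℝ} (hμ : 0 < μ) (h₁ : α < 1 / μ) (h₂ : 1 / μ < 1.5 * α) :
    2 / (μ * α) - 2 ∈ Set.Ioo 0 1 := by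
  rw [lt_div_iff₀ hμ] at h₁
  rw [div_lt_iff₀ hμ] at h₂
  have hμα : 0 < μ * α := by nlinarith
  constructor
  · rw [sub_pos, lt_div_iff₀ hμα]; linarith
  · rw [sub_lt_iff_lt_add, div_lt_iff₀ hμα]; linarith

theorem rate_mul_add_eq {μ α : ℝ} (hμ : μ ≠ 0) (hα : α ≠ 0) (h : 3 * α - 2 / μ ≠ 0) :
    (2 / (μ * α) - 2) * (4 / (3 * α - 2 / μ)) + 4 / α = 4 / (3 * α - 2 / μ) := by
  rw [eq_div_iff h, add_mul, mul_assoc, div_mul_cancel₀ _ h]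
  field_simp
  ring

theorem stmt_8_general
    {H L : Type*} [NormedAddCommGroup H] [InnerProductSpace ℝ H] [CompleteSpace H]
    [NormedAddCommGroup L] [InnerProductSpace ℝ L] [CompleteSpace L]
    (Φ : H →L[ℝ] L) (A : Set H)
    (hzero : (0 : H) ∈ A) (hsym : ∀ x ∈ A, -x ∈ A)
    (μ α : ℝ)
    (hcond₁ : α < 1 / μ) (hcond₂ : 1 / μ < 1.5 * α)
    (hbi : ∀ x₁ ∈ A, ∀ x₂ ∈ A,
      α * ‖x₁ + x₂‖ ^ 2 ≤ ‖Φ (x₁ + x₂)‖ ^ 2 ∧ ‖Φ (x₁ + x₂)‖ ^ 2 ≤ (1 / μ) * ‖x₁ + x₂‖ ^ 2)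
    (x : H) (y : L)
    (xA : H) (hxA : xA ∈ A)
    (eA : L) (heA : eA = y - Φ xA)
    (heA0 : eA ≠ 0)
    (δ : ℝ) (hδ : 0 < δ) (hδsmall : δ * ‖eA‖ < ‖xA‖)
    (xseq : ℕ → H) (hinit : xseq 0 = 0)
    (hstep : ∀ n, xseq (n + 1) ∈ A ∧ ∀ z ∈ A,
      ‖xseq (n + 1) - (xseq n + μ • (ContinuousLinearMap.adjoint Φ) (y - Φ (xseq n)))‖ ≤
      ‖z - (xseq n + μ • (ContinuousLinearMap.adjoint Φ) (y - Φ (xseq n)))‖) :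
    ∀ n : ℕ, (n : ℝ) ≥ 2 * Real.log (δ * ‖eA‖ / ‖xA‖) / Real.log (2 / (μ * α) - 2) →
      ‖x - xseq n‖ ≤ (Real.sqrt (4 / (3 * α - 2 / μ)) + δ) * ‖eA‖ + ‖xA - x‖ := by
  intro n hn
  set ρ := 2 / (μ * α) - 2
  set c := 4 / (3 * α - 2 / μ)
  have hα : 0 < α := by linarith
  have hμ : 0 < μ := one_div_pos.mp (hα.trans hcond₁)
  have hrec : ∀ k, ‖xA - xseq (k + 1)‖ ^ 2 ≤ ρ * ‖xA - xseq k‖ ^ 2 + 4 / α * ‖eA‖ ^ 2 := by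
    rw [heA]; exact norm_sub_iterate_sq_succ_le Φ hzero hsym hμ hα hbi y hxA hinit hstep
  have hρ := rate_mem_Ioo hμ hcond₁ hcond₂
  have hden : 0 < 3 * α - 2 / μ := by linarith [show 2 / μ = 2 * (1 / μ) by ring]
  have hc : 0 < c := div_pos four_pos hden
  have hfix : ρ * (c * ‖eA‖ ^ 2) + 4 / α * ‖eA‖ ^ 2 = c * ‖eA‖ ^ 2 := by
    linear_combination ‖eA‖ ^ 2 * rate_mul_add_eq hμ.ne' hα.ne' hden.ne'
  have hgeom := le_pow_mul_add_of_le_mul_add (s := fun k => ‖xA - xseq k‖ ^ 2) hρ.1.le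
    (by positivity) hfix hrec n
  have hxA0 : 0 < ‖xA‖ := (mul_nonneg hδ.le (norm_nonneg eA)).trans_lt hδsmall
  have hpow : ρ ^ n * ‖xA‖ ^ 2 ≤ (δ * ‖eA‖) ^ 2 := by
    rw [← le_div_iff₀ (by positivity), ← div_pow]
    refine pow_le_of_log_div_log_le hρ.1 hρ.2 (by positivity) ?_
    rwa [Real.log_pow, Nat.cast_ofNat]
  have hclose : ‖xA - xseq n‖ ≤ δ * ‖eA‖ + Real.sqrt c * ‖eA‖ := by
    refine le_add_of_sq_le_sq_add_sq (by positivity) (by positivity) ?_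
    rw [mul_pow (Real.sqrt c), Real.sq_sqrt hc.le]
    simp only [hinit, sub_zero] at hgeom
    linarith
  calc ‖x - xseq n‖ ≤ ‖x - xA‖ + ‖xA - xseq n‖ := norm_sub_le_norm_sub_add_norm_sub _ _ _
    _ ≤ (Real.sqrt c + δ) * ‖eA‖ + ‖xA - x‖ := by rw [norm_sub_rev x]; linarith

/-- the main recovery theorem for the Iterative Projection Algorithm. -/
theorem stmt_8
    {H L : Type*} [NormedAddCommGroup H] [InnerProductSpace ℝ H] [CompleteSpace H]
    [NormedAddCommGroup L] [InnerProductSpace ℝ L] [CompleteSpace L]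
    (Φ : H →L[ℝ] L) (A : Set H)
    (hzero : (0 : H) ∈ A) (hsym : ∀ x ∈ A, -x ∈ A)
    (hprox : ∀ z : H, ∃ a ∈ A, ∀ b ∈ A, ‖z - a‖ ≤ ‖z - b‖)
    (μ α : ℝ) (hμ : 0 < μ) (hα : 0 < α)
    (hcond₁ : α < 1 / μ) (hcond₂ : 1 / μ < 1.5 * α)
    (hbi : ∀ x₁ ∈ A, ∀ x₂ ∈ A,
      α * ‖x₁ + x₂‖ ^ 2 ≤ ‖Φ (x₁ + x₂)‖ ^ 2 ∧ ‖Φ (x₁ + x₂)‖ ^ 2 ≤ (1 / μ) * ‖x₁ + x₂‖ ^ 2)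
    (x : H) (e : L) (y : L) (hy : y = Φ x + e)
    (xA : H) (hxA : xA ∈ A) (hxAbest : ∀ z ∈ A, ‖x - xA‖ ≤ ‖x - z‖)
    (eA : L) (heA : eA = y - Φ xA)
    (hxA0 : xA ≠ 0) (heA0 : eA ≠ 0)
    (δ : ℝ) (hδ : 0 < δ) (hδsmall : δ * ‖eA‖ < ‖xA‖)
    (xseq : ℕ → H) (hinit : xseq 0 = 0)
    (hstep : ∀ n, xseq (n + 1) ∈ A ∧ ∀ z ∈ A,
      ‖xseq (n + 1) - (xseq n + μ • (ContinuousLinearMap.adjoint Φ) (y - Φ (xseq n)))‖ ≤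
      ‖z - (xseq n + μ • (ContinuousLinearMap.adjoint Φ) (y - Φ (xseq n)))‖) :
    ∀ n : ℕ, (n : ℝ) ≥ 2 * Real.log (δ * ‖eA‖ / ‖xA‖) / Real.log (2 / (μ * α) - 2) →
      ‖x - xseq n‖ ≤ (Real.sqrt (4 / (3 * α - 2 / μ)) + δ) * ‖eA‖ + ‖xA - x‖ :=
  stmt_8_general Φ A hzero hsym μ α hcond₁ hcond₂ hbi x y xA hxA eA heA heA0 δ hδ hδsmall xseq hinit
    hstep
end
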